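/- Let ω : ℝ² → ℝ² be a linear transformation and x ∈ ℝ² a nonzero vector. If x is an eigenvector of ω with eigenvalue λ, then limsup_n |ω^n x|^{1/n} = |λ|. If x is not an eigenvector of ω, then limsup_n |ω^n x|^{1/n} equals the spectral radius ρ(ω), the maximum of the absolute values of the complex eigenvalues of ω. -/

import Mathlib

/-- The spectral radius of a real 2×2 matrix: the maximum of the absolute values of its
complex eigenvalues. -/
noncomputable def specRad (ω : Matrix (Fin 2) (Fin 2) ℝ) : ℝ :=
  sSup ((fun z : ℂ => ‖z‖) '' spectrum ℂ (ω.map Complex.ofReal))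

/-- The growth rate `limsup_n |ω^n x|^{1/n}` where `|(x₁,x₂)| = |x₁| + |x₂|`. -/
noncomputable def growth (ω : Matrix (Fin 2) (Fin 2) ℝ) (x : Fin 2 → ℝ) : ℝ :=
  Filter.limsup
    (fun n : ℕ => (|((ω ^ n).mulVec x) 0| + |((ω ^ n).mulVec x) 1|) ^ ((n : ℝ)⁻¹))
    Filter.atTop

/-!
If `x` is an eigenvector, `ω ^ n x = λ ^ n x` and the `n`-th roots of `|λ| ^ n |x|` tend to `|λ|`.
Otherwise `x` and `ω x` form a basis; with `P` the matrix of columns `x, ω x` we get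
`ω ^ n = [ω ^ n x | ω ^ (n + 1) x] P⁻¹`, so `‖ω ^ n‖` and `|ω ^ n x| + |ω ^ (n + 1) x|` bound each
other up to constant factors. Gelfand's formula `‖ω ^ n‖ ^ (1 / n) → ρ(ω)` then forces
`limsup |ω ^ n x| ^ (1 / n) = ρ(ω)`: were it `< q < ρ(ω)`, both `|ω ^ n x|` and `|ω ^ (n + 1) x|`
would eventually be `O(q ^ n)`, hence so would `‖ω ^ n‖`.
-/

open Filter Topology Matrix
open scoped ENNReal

-- The maximal-row-sum operator norm: submultiplicative, as Gelfand's formula requires.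
attribute [local instance] Matrix.linftyOpSeminormedAddCommGroup Matrix.linftyOpNormedAddCommGroup
  Matrix.linftyOpNormedRing Matrix.linftyOpNormedAlgebra

lemma tendsto_const_rpow_inv_natCast {c : ℝ} (hc : 0 < c) :
    Tendsto (fun n : ℕ => c ^ (n : ℝ)⁻¹) atTop (𝓝 1) := by
  simpa [Function.comp_def] using ((Real.continuousAt_const_rpow hc.ne').tendsto).comp
    (tendsto_inv_atTop_nhds_zero_nat (𝕜 := ℝ))

lemma tendsto_mul_pow_rpow_inv_natCast {C q : ℝ} (hC : 0 < C) (hq : 0 ≤ q) :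
    Tendsto (fun n : ℕ => (C * q ^ n) ^ (n : ℝ)⁻¹) atTop (𝓝 q) := by
  have h := (tendsto_const_rpow_inv_natCast hC).mul_const q
  rw [one_mul] at h
  refine h.congr' ?_
  filter_upwards [eventually_ne_atTop 0] with n hn
  rw [Real.mul_rpow hC.le (by positivity), Real.pow_rpow_inv_natCast hq hn]

section NthRootGrowth

variable {u t : ℕ → ℝ} {r c : ℝ}

lemma eventually_le_pow_of_limsup_rpow_inv_lt (hu : ∀ n, 0 ≤ u n) {q : ℝ}
    (hbdd : IsBoundedUnder (· ≤ ·) atTop fun n : ℕ => u n ^ (n : ℝ)⁻¹)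
    (hq : limsup (fun n : ℕ => u n ^ (n : ℝ)⁻¹) atTop < q) :
    0 < q ∧ ∀ᶠ n in atTop, u n ≤ q ^ n := by
  have hlt := eventually_lt_of_limsup_lt hq hbdd
  obtain ⟨n, hn⟩ := hlt.exists
  have hq0 : 0 < q := (Real.rpow_nonneg (hu n) _).trans_lt hn
  refine ⟨hq0, ?_⟩
  filter_upwards [hlt, eventually_gt_atTop 0] with n hn hpos
  rw [Real.rpow_inv_lt_iff_of_pos (hu n) hq0.le (by positivity), Real.rpow_natCast] at hn
  exact hn.le

lemma le_of_limsup_rpow_inv_lt (hu : ∀ n, 0 ≤ u n) (ht : ∀ n, 0 ≤ t n) (hc : 0 < c)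
    (htu : ∀ n, t n ≤ c * (u n + u (n + 1)))
    (htr : Tendsto (fun n : ℕ => t n ^ (n : ℝ)⁻¹) atTop (𝓝 r)) {q : ℝ}
    (hbdd : IsBoundedUnder (· ≤ ·) atTop fun n : ℕ => u n ^ (n : ℝ)⁻¹)
    (hq : limsup (fun n : ℕ => u n ^ (n : ℝ)⁻¹) atTop < q) : r ≤ q := by
  obtain ⟨hq0, hle⟩ := eventually_le_pow_of_limsup_rpow_inv_lt hu hbdd hq
  have ht_le : ∀ᶠ n in atTop, t n ≤ c * (1 + q) * q ^ n := by
    filter_upwards [hle, (tendsto_add_atTop_nat 1).eventually hle] with n h₀ h₁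
    calc t n ≤ c * (u n + u (n + 1)) := htu n
      _ ≤ c * (q ^ n + q ^ (n + 1)) := by gcongr
      _ = c * (1 + q) * q ^ n := by ring
  refine le_of_tendsto_of_tendsto htr
    (tendsto_mul_pow_rpow_inv_natCast (C := c * (1 + q)) (by positivity) hq0.le) ?_
  filter_upwards [ht_le] with n hn
  exact Real.rpow_le_rpow (ht n) hn (by positivity)

lemma limsup_rpow_inv_eq_of_le_of_le (hu : ∀ n, 0 ≤ u n) (ht : ∀ n, 0 ≤ t n) {c₁ c₂ : ℝ}
    (hc₁ : 0 < c₁) (hc₂ : 0 < c₂) (hut : ∀ n, u n ≤ c₁ * t n)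
    (htu : ∀ n, t n ≤ c₂ * (u n + u (n + 1)))
    (htr : Tendsto (fun n : ℕ => t n ^ (n : ℝ)⁻¹) atTop (𝓝 r)) :
    limsup (fun n : ℕ => u n ^ (n : ℝ)⁻¹) atTop = r := by
  have hmajor : Tendsto (fun n : ℕ => (c₁ * t n) ^ (n : ℝ)⁻¹) atTop (𝓝 r) := by
    simpa [Real.mul_rpow hc₁.le (ht _)] using (tendsto_const_rpow_inv_natCast hc₁).mul htr
  have hle : ∀ n : ℕ, u n ^ (n : ℝ)⁻¹ ≤ (c₁ * t n) ^ (n : ℝ)⁻¹ := fun n =>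
    Real.rpow_le_rpow (hu n) (hut n) (by positivity)
  have hbdd : IsBoundedUnder (· ≤ ·) atTop fun n : ℕ => u n ^ (n : ℝ)⁻¹ :=
    hmajor.isBoundedUnder_le.mono_le (Eventually.of_forall hle)
  refine le_antisymm ?_ (le_of_forall_gt_imp_ge_of_dense fun q hq =>
    le_of_limsup_rpow_inv_lt hu ht hc₂ htu htr hbdd hq)
  rw [← hmajor.limsup_eq]
  exact limsup_le_limsup (Eventually.of_forall hle)
    (isCoboundedUnder_le_of_le _ fun n => Real.rpow_nonneg (hu n) _) hmajor.isBoundedUnder_le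

end NthRootGrowth

section ComplexBanachAlgebra

variable {A : Type*} [NormedRing A] [NormedAlgebra ℂ A] [CompleteSpace A] [Nontrivial A]

lemma sSup_norm_spectrum_eq_spectralRadius (a : A) :
    sSup ((fun z : ℂ => ‖z‖) '' spectrum ℂ a) = (spectralRadius ℂ a).toReal := by
  obtain ⟨z, hz, hzr⟩ := spectrum.exists_nnnorm_eq_spectralRadius a
  rw [← hzr]
  refine IsGreatest.csSup_eq ⟨⟨z, hz, rfl⟩, ?_⟩
  rintro _ ⟨w, hw, rfl⟩
  have hwz : (‖w‖₊ : ℝ≥0∞) ≤ ‖z‖₊ := hzr ▸ le_iSup₂ (α := ℝ≥0∞) w hw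
  exact_mod_cast hwz

lemma tendsto_norm_pow_rpow_inv_spectralRadius (a : A) :
    Tendsto (fun n : ℕ => ‖a ^ n‖ ^ (n : ℝ)⁻¹) atTop (𝓝 (spectralRadius ℂ a).toReal) := by
  have hfin : spectralRadius ℂ a ≠ ⊤ := by
    obtain ⟨z, -, hz⟩ := spectrum.exists_nnnorm_eq_spectralRadius a
    exact hz ▸ ENNReal.coe_ne_top
  have h := (ENNReal.tendsto_toReal hfin).comp
    (spectrum.pow_nnnorm_pow_one_div_tendsto_nhds_spectralRadius a)
  refine h.congr fun n => ?_
  simp [← ENNReal.toReal_rpow]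

end ComplexBanachAlgebra

namespace Matrix

variable {m n : Type*} [Fintype m] [Fintype n]

lemma linfty_opNorm_map_ofReal (M : Matrix m n ℝ) : ‖M.map Complex.ofReal‖ = ‖M‖ := by
  simp [linfty_opNorm_def]

lemma linfty_opNorm_le_sum_sum {α : Type*} [SeminormedAddCommGroup α] (M : Matrix m n α) :
    ‖M‖ ≤ ∑ i, ∑ j, ‖M i j‖ := by
  have h : (Finset.univ.sup fun i => ∑ j, ‖M i j‖₊) ≤ ∑ i, ∑ j, ‖M i j‖₊ :=
    Finset.sup_le fun i hi =>
      Finset.single_le_sum (f := fun i => ∑ j, ‖M i j‖₊) (fun _ _ => zero_le) hi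
  rw [linfty_opNorm_def]
  simpa only [NNReal.coe_sum, coe_nnnorm] using NNReal.coe_le_coe.mpr h

omit [Fintype m] in
lemma mul_transpose_of {ι R : Type*} [CommSemiring R] (M : Matrix m n R) (v : ι → n → R) :
    M * (of v)ᵀ = (of fun i => M *ᵥ v i)ᵀ := by
  ext i j
  simp [mul_apply, mulVec, dotProduct]

lemma pow_mulVec_of_mulVec_eq_smul {R : Type*} [CommSemiring R] [DecidableEq n]
    {ω : Matrix n n R} {x : n → R} {lam : R} (h : ω *ᵥ x = lam • x) (k : ℕ) :
    (ω ^ k) *ᵥ x = lam ^ k • x := by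
  induction k with
  | zero => simp
  | succ k ih => rw [pow_succ, ← mulVec_mulVec, h, mulVec_smul, ih, smul_smul, ← pow_succ']

end Matrix

lemma tendsto_norm_pow_rpow_inv_specRad (ω : Matrix (Fin 2) (Fin 2) ℝ) :
    Tendsto (fun n : ℕ => ‖ω ^ n‖ ^ (n : ℝ)⁻¹) atTop (𝓝 (specRad ω)) := by
  have hnorm (n : ℕ) : ‖ω.map Complex.ofReal ^ n‖ = ‖ω ^ n‖ := by
    rw [← linfty_opNorm_map_ofReal]
    exact congrArg norm (Matrix.map_pow ω Complex.ofRealHom n).symm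
  rw [specRad, sSup_norm_spectrum_eq_spectralRadius]
  simpa only [hnorm] using tendsto_norm_pow_rpow_inv_spectralRadius (ω.map Complex.ofReal)

lemma norm_le_abs_add_abs (v : Fin 2 → ℝ) : ‖v‖ ≤ |v 0| + |v 1| := by
  refine (pi_norm_le_iff_of_nonneg (by positivity)).mpr fun i => ?_
  fin_cases i <;> simp [Real.norm_eq_abs]

lemma abs_add_abs_le_two_mul_norm (v : Fin 2 → ℝ) : |v 0| + |v 1| ≤ 2 * ‖v‖ := by
  have h₀ := norm_le_pi_norm v 0
  have h₁ := norm_le_pi_norm v 1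
  rw [Real.norm_eq_abs] at h₀ h₁
  linarith

lemma isUnit_transpose_of_not_eigenvector {K : Type*} [Field K] {ω : Matrix (Fin 2) (Fin 2) K}
    {x : Fin 2 → K} (h : ¬∃ lam : K, ω *ᵥ x = lam • x) :
    IsUnit ((of ![x, ω *ᵥ x])ᵀ : Matrix (Fin 2) (Fin 2) K) := by
  have hx : x ≠ 0 := fun hx => h ⟨0, by simp [hx]⟩
  rw [← linearIndependent_cols_iff_isUnit]
  exact (LinearIndependent.pair_iff' hx).mpr fun lam hlam => h ⟨lam, hlam.symm⟩

lemma exists_norm_pow_le_of_not_eigenvector {ω : Matrix (Fin 2) (Fin 2) ℝ} {x : Fin 2 → ℝ}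
    (h : ¬∃ lam : ℝ, ω *ᵥ x = lam • x) :
    ∃ C > 0, ∀ n : ℕ, ‖ω ^ n‖ ≤ C * ((|(ω ^ n *ᵥ x) 0| + |(ω ^ n *ᵥ x) 1|) +
      (|(ω ^ (n + 1) *ᵥ x) 0| + |(ω ^ (n + 1) *ᵥ x) 1|)) := by
  set P : Matrix (Fin 2) (Fin 2) ℝ := (of ![x, ω *ᵥ x])ᵀ
  have hP : IsUnit P.det := (isUnit_iff_isUnit_det P).mp (isUnit_transpose_of_not_eigenvector h)
  have hP_inv : P⁻¹ ≠ 0 := ((isUnit_iff_isUnit_det _).mpr (isUnit_nonsing_inv_det P hP)).ne_zero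
  refine ⟨‖P⁻¹‖, norm_pos_iff.mpr hP_inv, fun n => ?_⟩
  calc ‖ω ^ n‖ = ‖ω ^ n * P * P⁻¹‖ := by rw [mul_nonsing_inv_cancel_right P _ hP]
    _ ≤ ‖P⁻¹‖ * ‖ω ^ n * P‖ := by rw [mul_comm]; exact linfty_opNorm_mul _ _
    _ ≤ _ := by
      gcongr
      refine (linfty_opNorm_le_sum_sum _).trans_eq ?_
      simp [P, mul_transpose_of, Fin.sum_univ_two, pow_succ, ← mulVec_mulVec]
      ring

lemma growth_of_mulVec_eq_smul {ω : Matrix (Fin 2) (Fin 2) ℝ} {x : Fin 2 → ℝ} (hx : x ≠ 0)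
    {lam : ℝ} (h : ω *ᵥ x = lam • x) : growth ω x = |lam| := by
  have hc : 0 < |x 0| + |x 1| := (norm_pos_iff.mpr hx).trans_le (norm_le_abs_add_abs x)
  refine ((tendsto_mul_pow_rpow_inv_natCast hc (abs_nonneg lam)).congr fun n => ?_).limsup_eq
  simp only [pow_mulVec_of_mulVec_eq_smul h, Pi.smul_apply, smul_eq_mul, abs_mul, abs_pow]
  congr 1
  ring

lemma growth_eq_specRad_of_not_eigenvector {ω : Matrix (Fin 2) (Fin 2) ℝ} {x : Fin 2 → ℝ}
    (h : ¬∃ lam : ℝ, ω *ᵥ x = lam • x) : growth ω x = specRad ω := by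
  obtain ⟨C, hC, hbound⟩ := exists_norm_pow_le_of_not_eigenvector h
  have hx : 0 < ‖x‖ := norm_pos_iff.mpr fun hx => h ⟨0, by simp [hx]⟩
  refine limsup_rpow_inv_eq_of_le_of_le (fun n => by positivity) (fun n => norm_nonneg _)
    (by positivity : 0 < 2 * ‖x‖) hC (fun n => ?_) hbound (tendsto_norm_pow_rpow_inv_specRad ω)
  calc _ ≤ 2 * ‖ω ^ n *ᵥ x‖ := abs_add_abs_le_two_mul_norm _
    _ ≤ 2 * (‖ω ^ n‖ * ‖x‖) := by gcongr; exact linfty_opNorm_mulVec _ _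
    _ = 2 * ‖x‖ * ‖ω ^ n‖ := by ring

/-- Lemma 5.2: if `x ≠ 0` is an eigenvector of `ω` with eigenvalue `λ`, then the growth of
the iterates `ω^n x` is `|λ|`; if `x` is not an eigenvector, the growth equals the spectral
radius of `ω`. -/
theorem stmt_5 (ω : Matrix (Fin 2) (Fin 2) ℝ) (x : Fin 2 → ℝ) (hx : x ≠ 0) :
    (∀ lam : ℝ, ω.mulVec x = lam • x → growth ω x = |lam|) ∧
    ((¬ ∃ lam : ℝ, ω.mulVec x = lam • x) → growth ω x = specRad ω) :=
  ⟨fun _ => growth_of_mulVec_eq_smul hx, growth_eq_specRad_of_not_eigenvector⟩
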